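/- arXiv:2506.01649 — 11 statements merged into one kernel-verified Lean document; each statement's English description precedes it below -/
import Mathlib

section
/- For every nonnegative integer r, the Ramanujan polynomials satisfy ∑_{k=1}^{r+1} ψ_k(r,x) = x^r. -/
open Polynomial

lemma degree_sub_comp_lt (p : ℚ[X]) (hp : p ≠ 0) :
    degree (p - p.comp (X - 1)) < degree p := by
  have h1 : (X - 1 : ℚ[X]) = X - C 1 := by simp
  have hlc : (p.comp (X - 1)).leadingCoeff = p.leadingCoeff := by
    rw [leadingCoeff_comp (by rw [h1, natDegree_X_sub_C]; norm_num)]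
    rw [h1, (monic_X_sub_C (1:ℚ)).leadingCoeff, one_pow, mul_one]
  have hne : p.comp (X - 1) ≠ 0 := by
    intro h; rw [h, leadingCoeff_zero] at hlc; exact hp (leadingCoeff_eq_zero.mp hlc.symm)
  have hdeg : degree p = degree (p.comp (X - 1)) := by
    rw [degree_eq_natDegree hp, degree_eq_natDegree hne, natDegree_comp, h1,
      natDegree_X_sub_C, mul_one]
  exact degree_sub_lt hdeg hp hlc.symm

lemma natDegree_sub_comp_le (p : ℚ[X]) (d : ℕ) (hd : natDegree p ≤ d + 1) :
    natDegree (p - p.comp (X - 1)) ≤ d := by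
  rcases eq_or_ne p 0 with rfl | hp
  · simp
  rcases eq_or_ne (p - p.comp (X - 1)) 0 with h0 | h0
  · simp [h0]
  have := natDegree_lt_natDegree h0 (degree_sub_comp_lt p hp)
  omega

/-- Ramanujan's identity: ∑_{k=1}^{r+1} ψ_k(r,x) = x^r, where `psi r k` denotes ψ_k(r,·). -/
theorem ramanujan_psi_sum
    (psi : ℕ → ℕ → Polynomial ℚ)
    (h_init : psi 0 1 = 1)
    (h_zero : ∀ r, psi r 0 = 0)
    (h_big : ∀ r k, k > r + 1 → psi r k = 0)
    (h_rec : ∀ r k, 1 ≤ k →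
      psi (r + 1) k = (X - 1) * (psi r k).comp (X - 1)
        + psi (r + 1) (k - 1) - (psi (r + 1) (k - 1)).comp (X - 1)) :
    ∀ r : ℕ, ∑ k ∈ Finset.Icc 1 (r + 1), psi r k = X ^ r := by
  have hX1 : natDegree (X - 1 : ℚ[X]) = 1 := by
    have h1 : (X - 1 : ℚ[X]) = X - C 1 := by simp
    rw [h1, natDegree_X_sub_C]
  -- degree bound: natDegree (psi r k) ≤ r + 1 - k for 1 ≤ k ≤ r+1
  have hdeg : ∀ r, ∀ k, 1 ≤ k → k ≤ r + 1 → natDegree (psi r k) ≤ r + 1 - k := by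
    intro r
    induction r with
    | zero =>
      intro k hk1 hk2
      interval_cases k
      simp [h_init]
    | succ r ih =>
      intro k
      induction k with
      | zero => intro h1 _; omega
      | succ k ihk =>
        intro _ hk2
        rw [h_rec r (k+1) (by omega)]
        simp only [Nat.add_sub_cancel]
        have hA : natDegree ((X - 1 : ℚ[X]) * (psi r (k+1)).comp (X - 1)) ≤ r + 2 - (k+1) := by
          rcases le_or_gt (k+1) (r+1) with h | h
          · refine le_trans natDegree_mul_le ?_
            rw [natDegree_comp, hX1, mul_one]
            have := ih (k+1) (by omega) h
            omega
          · rw [h_big r (k+1) (by omega)]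
            simp
        have hB : natDegree (psi (r+1) k - (psi (r+1) k).comp (X - 1)) ≤ r + 2 - (k+1) := by
          rcases Nat.eq_zero_or_pos k with rfl | hk
          · rw [h_zero]; simp
          · apply natDegree_sub_comp_le
            have := ihk hk (by omega)
            omega
        rw [add_sub_assoc]
        exact le_trans (natDegree_add_le _ _) (max_le hA hB)
  -- top polynomial is constant
  have hconst : ∀ r, (psi r (r+1)).comp (X - 1) = psi r (r+1) := by
    intro r
    have h0 : natDegree (psi r (r+1)) ≤ 0 := by
      have := hdeg r (r+1) (by omega) le_rfl
      omega
    have hc := eq_C_of_natDegree_le_zero h0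
    rw [hc, C_comp]
  -- sums commute with comp
  have comp_sum : ∀ (s : Finset ℕ) (f : ℕ → ℚ[X]),
      (∑ k ∈ s, f k).comp (X - 1) = ∑ k ∈ s, (f k).comp (X - 1) := by
    intro s f
    simp [Polynomial.comp, eval₂_finset_sum]
  intro r
  induction r with
  | zero => simp [h_init]
  | succ r ih =>
    show (∑ k ∈ Finset.Icc 1 (r+2), psi (r+1) k) = X ^ (r+1)
    set S := ∑ k ∈ Finset.Icc 1 (r+2), psi (r+1) k with hS
    set P := psi (r+1) (r+2) with hPdef
    have hPc : P.comp (X - 1) = P := hconst (r+1)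
    -- reindexed sum
    have hre : ∑ k ∈ Finset.Icc 1 (r+2), psi (r+1) (k-1) = S - P := by
      have hmap : Finset.Icc 1 (r+2)
          = Finset.map (addRightEmbedding 1) (Finset.Icc 0 (r+1)) := by
        rw [Finset.map_add_right_Icc]
      rw [hmap, Finset.sum_map]
      simp only [addRightEmbedding_apply, Nat.add_sub_cancel]
      have hins : Finset.Icc 0 (r+1) = insert 0 (Finset.Icc 1 (r+1)) := by
        ext x; simp; omega
      rw [hins, Finset.sum_insert (by simp), h_zero, zero_add, hS,
        Finset.sum_Icc_succ_top (by omega : 1 ≤ r + 2)]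
      rw [← hPdef]
      ring
    -- the inner psi-r sum
    have hprev : ∑ k ∈ Finset.Icc 1 (r+2), psi r k = X ^ r := by
      rw [Finset.sum_Icc_succ_top (by omega : 1 ≤ r + 1 + 1)]
      rw [ih, h_big r (r+2) (by omega), add_zero]
    have hsum : (∑ k ∈ Finset.Icc 1 (r+2), psi (r+1) k)
        = (X-1)^(r+1) + (S - P) - (S.comp (X - 1) - P) := by
      have hstep : ∀ k ∈ Finset.Icc 1 (r+2), psi (r+1) k
          = (X - 1) * (psi r k).comp (X - 1)
            + (psi (r+1) (k-1) - (psi (r+1) (k-1)).comp (X - 1)) := by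
        intro k hk
        simp only [Finset.mem_Icc] at hk
        rw [h_rec r k hk.1, add_sub_assoc]
      rw [Finset.sum_congr rfl hstep, Finset.sum_add_distrib, Finset.sum_sub_distrib]
      rw [← Finset.mul_sum, ← comp_sum, ← comp_sum, hprev, hre]
      rw [sub_comp, hPc]
      rw [show ((X:ℚ[X]) ^ r).comp (X - 1) = (X - 1)^r by simp [pow_comp]]
      ring
    rw [← hS] at hsum
    have hcomp : S.comp (X - 1) = (X - 1)^(r+1) := by
      linear_combination hsum
    have h2 := congrArg (fun p : ℚ[X] => p.comp (X + 1)) hcomp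
    simpa [comp_assoc, sub_comp, pow_comp] using h2
end

section
/- The Ramanujan polynomials satisfy the recurrence ψ_k(r,x) = (x - r - k + 1)ψ_k(r-1,x) + (r + k - 2)ψ_{k-1}(r-1,x) for all r ≥ 1 and k ≥ 1. -/
open Polynomial

/-- The Berndt–Evans–Wilson recurrence:
ψ_k(r,x) = (x - r - k + 1)·ψ_k(r-1,x) + (r + k - 2)·ψ_{k-1}(r-1,x) for r ≥ 1, k ≥ 1,
where `psi r k` denotes ψ_k(r,·). -/
theorem ramanujan_psi_berndt_recurrence
    (psi : ℕ → ℕ → Polynomial ℚ)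
    (h_init : psi 0 1 = 1)
    (h_zero : ∀ r, psi r 0 = 0)
    (h_big : ∀ r k, k > r + 1 → psi r k = 0)
    (h_rec : ∀ r k, 1 ≤ k →
      psi (r + 1) k = (X - 1) * (psi r k).comp (X - 1)
        + psi (r + 1) (k - 1) - (psi (r + 1) (k - 1)).comp (X - 1)) :
    ∀ r k : ℕ, 1 ≤ r → 1 ≤ k →
      psi r k = (X - C (r : ℚ) - C (k : ℚ) + 1) * psi (r - 1) k
        + C ((r : ℚ) + (k : ℚ) - 2) * psi (r - 1) (k - 1) := by
  have comp_eq : ∀ {p q : Polynomial ℚ}, p = q → p.comp (X - 1) = q.comp (X - 1) :=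
    fun h => by rw [h]
  suffices H : ∀ n r k : ℕ, r + k ≤ n → 1 ≤ r → 1 ≤ k →
      psi r k = (X - C (r : ℚ) - C (k : ℚ) + 1) * psi (r - 1) k
        + C ((r : ℚ) + (k : ℚ) - 2) * psi (r - 1) (k - 1) by
    exact fun r k hr hk => H (r + k) r k le_rfl hr hk
  intro n
  induction n with
  | zero => intro r k hn hr hk; omega
  | succ m ih =>
    intro r k hn hr hk
    obtain ⟨s, rfl⟩ : ∃ s, r = s + 1 := ⟨r - 1, by omega⟩
    obtain ⟨t, rfl⟩ : ∃ t, k = t + 1 := ⟨k - 1, by omega⟩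
    simp only [Nat.add_sub_cancel]
    match s, t with
    | 0, 0 =>
      -- (r, k) = (1, 1)
      have e1 := h_rec 0 1 le_rfl
      simp only [h_init, h_zero, one_comp, zero_comp] at e1 ⊢
      rw [e1]; push_cast; simp only [map_one]; ring
    | 0, 1 =>
      -- (r, k) = (1, 2)
      have p11 : psi 1 1 = X - 1 := by
        have e1 := h_rec 0 1 le_rfl
        simp only [h_init, h_zero, one_comp, zero_comp] at e1
        rw [e1]; ring
      have e1 := h_rec 0 2 (by omega)
      have h02 : psi 0 2 = 0 := h_big 0 2 (by omega)
      simp only [h02, zero_comp, p11, h_init, sub_comp, X_comp, one_comp, zero_add] at e1 ⊢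
      push_cast
      simp only [map_one, map_add, map_sub, map_ofNat] at e1 ⊢
      linear_combination e1
    | 0, (t + 2) =>
      -- (r, k) = (1, t + 3), everything vanishes
      have hA : psi 1 (t + 3) = 0 := h_big 1 (t + 3) (by omega)
      have hB : psi 0 (t + 3) = 0 := h_big 0 (t + 3) (by omega)
      have hC : psi 0 (t + 2) = 0 := h_big 0 (t + 2) (by omega)
      simp [hA, hB, hC]
    | (s + 1), 0 =>
      -- (r, k) = (s + 2, 1)
      have e1 := h_rec (s + 1) 1 le_rfl
      have e3 := ih (s + 1) 1 (by omega) (by omega) le_rfl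
      have e4 := h_rec s 1 le_rfl
      simp only [Nat.add_sub_cancel, h_zero, zero_comp, mul_zero, add_zero, sub_zero] at e1 e3 e4 ⊢
      have e3' := comp_eq e3
      simp only [add_comp, sub_comp, mul_comp, X_comp, one_comp, C_comp] at e3'
      push_cast at e1 e3 e3' e4 ⊢
      simp only [map_add, map_sub, map_one, map_ofNat] at e1 e3 e3' e4 ⊢
      linear_combination e1 + (X - 1) * e3' - (X - C (s : ℚ) - 2) * e4
    | (s + 1), (t + 1) =>
      -- (r, k) = (s + 2, t + 2), the general step
      have e1 := h_rec (s + 1) (t + 2) (by omega)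
      have e2 := ih (s + 2) (t + 1) (by omega) (by omega) (by omega)
      have e3 := ih (s + 1) (t + 2) (by omega) (by omega) (by omega)
      have e4 := h_rec s (t + 2) (by omega)
      have e5 := h_rec s (t + 1) (by omega)
      simp only [Nat.add_sub_cancel, show t + 2 - 1 = t + 1 from rfl,
        show t + 1 - 1 = t from rfl, show s + 1 + 1 = s + 2 from rfl] at e1 e2 e3 e4 e5 ⊢
      have e2' := comp_eq e2
      have e3' := comp_eq e3
      simp only [add_comp, sub_comp, mul_comp, X_comp, one_comp, C_comp] at e2' e3'
      push_cast at e1 e2 e2' e3 e3' e4 e5 ⊢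
      simp only [map_add, map_sub, map_one, map_ofNat] at e1 e2 e2' e3 e3' e4 e5 ⊢
      linear_combination e1 + e2 - e2' - (C (s : ℚ) + C (t : ℚ) + 1) * e5
        - (X - C (s : ℚ) - C (t : ℚ) - 3) * e4 + (X - 1) * e3'
end

section
/- Let D_H be the derivation on ℚ(a,b,c,u) with D_H(a) = ab, D_H(b) = bc(1+u), D_H(c) = c²(1+u), D_H(u) = cu². Then the rational identity u⁻¹·D_H(u) − c⁻¹·D_H(c) + u⁻²·D_H(u) = 0 holds, which is equivalent to D_H(u c⁻¹ e^{-1/u}) = 0. -/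
/-- For the derivation D_H with D_H(a)=ab, D_H(b)=bc(1+u), D_H(c)=c²(1+u), D_H(u)=cu²
on ℚ(a,b,c,u), the identity equivalent to D_H(u·c⁻¹·e^{-1/u}) = 0:
D_H(u)/u − D_H(c)/c + D_H(u)/u² = 0. -/
theorem derivH_u_cinv_exp_constant {K : Type*} [Field K] [Algebra ℚ K]
    (D : Derivation ℚ K K) (a b c u : K)
    (ha : a ≠ 0) (hb : b ≠ 0) (hc : c ≠ 0) (hu : u ≠ 0)
    (hDa : D a = a * b) (hDb : D b = b * c * (1 + u))
    (hDc : D c = c ^ 2 * (1 + u)) (hDu : D u = c * u ^ 2) :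
    D u / u - D c / c + D u / u ^ 2 = 0 := by
  rw [hDc, hDu]
  field_simp
  ring
end

section
/- Let D be the derivation on ℚ(a,x,u,v,z) with D(a) = axv, D(x) = xvz, D(z) = vz², D(v) = uv²z, D(u) = u²vz. Then for every n ≥ 2, D^{n-2}(av) = ((u-1)/(xu))·D^{n-1}(a) + (v/u)·(1 + (n-2)·z/x)·D^{n-2}(a). -/
/-!
With `p = (u - 1)/(xu)`, `q = v/u` and `r = z/x` one checks `D q = D r = 0`, `D p = q r` and
`a v = p D(a) + q a`. Differentiating `D^m(a v) = p D^{m+1}(a) + q (1 + m r) D^m(a)` once more,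
the term `D(p) D^{m+1}(a) = q r D^{m+1}(a)` is exactly what raises `m` to `m + 1`.
-/

namespace Derivation

theorem iterate_eq_mul_iterate_add_mul_iterate {R A : Type*} [CommSemiring R] [CommSemiring A]
    [Algebra R A] (D : Derivation R A A) {p q r b f : A}
    (hp : D p = q * r) (hq : D q = 0) (hr : D r = 0) (hb : b = p * D f + q * f) (m : ℕ) :
    (⇑D)^[m] b = p * (⇑D)^[m + 1] f + q * (1 + m * r) * (⇑D)^[m] f := by
  induction m with
  | zero => simpa using hb
  | succ m ih =>
    have hcoeff : D (q * (1 + m * r)) = 0 := by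
      simp only [leibniz, map_add, map_one_eq_zero, map_natCast, hq, hr, smul_eq_mul]
      ring
    rw [Function.iterate_succ_apply', ih, map_add, leibniz, leibniz, hp, hcoeff,
      ← Function.iterate_succ_apply' D (m + 1), ← Function.iterate_succ_apply' D m]
    simp only [smul_eq_mul]
    push_cast
    ring

theorem map_div_eq_zero_of_mul_eq_mul {R K : Type*} [CommRing R] [Field K] [Algebra R K]
    (D : Derivation R K K) {s t : K} (h : D s * t = s * D t) : D (s / t) = 0 := by
  simp only [leibniz_div, smul_eq_mul, mul_comm t, h, sub_self, mul_zero]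

end Derivation

theorem deriv_iterate_av_recurrence_general {K : Type*} [Field K] [Algebra ℚ K]
    (D : Derivation ℚ K K) (a x u v z : K)
    (hx : x ≠ 0) (hu : u ≠ 0)
    (hDa : D a = a * x * v) (hDx : D x = x * v * z) (hDz : D z = v * z ^ 2)
    (hDv : D v = u * v ^ 2 * z) (hDu : D u = u ^ 2 * v * z) :
    ∀ n : ℕ, 2 ≤ n →
      (⇑D)^[n - 2] (a * v)
        = (u - 1) / (x * u) * (⇑D)^[n - 1] a
          + v / u * (1 + ((n : K) - 2) * z / x) * (⇑D)^[n - 2] a := by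
  intro n hn
  have hq : D (v / u) = 0 := D.map_div_eq_zero_of_mul_eq_mul (by rw [hDv, hDu]; ring)
  have hr : D (z / x) = 0 := D.map_div_eq_zero_of_mul_eq_mul (by rw [hDz, hDx]; ring)
  have hp : D ((u - 1) / (x * u)) = v / u * (z / x) := by
    rw [Derivation.leibniz_div, map_sub, D.map_one_eq_zero, Derivation.leibniz, hDu, hDx]
    simp only [smul_eq_mul]
    field_simp
    ring
  have hb : a * v = (u - 1) / (x * u) * D a + v / u * a := by
    rw [hDa]
    field_simp
    ring
  obtain ⟨m, rfl⟩ := Nat.exists_eq_add_of_le' hn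
  have key := D.iterate_eq_mul_iterate_add_mul_iterate hp hq hr hb m
  simp only [Nat.add_sub_cancel, Nat.add_succ_sub_one, Nat.cast_add, Nat.cast_ofNat,
    add_sub_cancel_right] at key ⊢
  rw [key, mul_div_assoc]

/-- For the derivation with D(a)=axv, D(x)=xvz, D(z)=vz², D(v)=uv²z, D(u)=u²vz
on ℚ(a,x,u,v,z), for every n ≥ 2:
D^{n-2}(av) = ((u-1)/(xu))·D^{n-1}(a) + (v/u)·(1 + (n-2)·z/x)·D^{n-2}(a). -/
theorem deriv_iterate_av_recurrence {K : Type*} [Field K] [Algebra ℚ K]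
    (D : Derivation ℚ K K) (a x u v z : K)
    (ha : a ≠ 0) (hx : x ≠ 0) (hu : u ≠ 0) (hv : v ≠ 0) (hz : z ≠ 0)
    (hDa : D a = a * x * v) (hDx : D x = x * v * z) (hDz : D z = v * z ^ 2)
    (hDv : D v = u * v ^ 2 * z) (hDu : D u = u ^ 2 * v * z) :
    ∀ n : ℕ, 2 ≤ n →
      (⇑D)^[n - 2] (a * v)
        = (u - 1) / (x * u) * (⇑D)^[n - 1] a
          + v / u * (1 + ((n : K) - 2) * z / x) * (⇑D)^[n - 2] a :=
  deriv_iterate_av_recurrence_general D a x u v z hx hu hDa hDx hDz hDv hDu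
end

section
/- Let D be the derivation on ℚ(u,v,z) with D(u) = u²vz, D(v) = uv²z, D(z) = vz². Define R_n(u) by D^{n-1}(vz) = v^n z^n R_n(u) (this is well defined, i.e., D^{n-1}(vz) is divisible by v^n z^n with quotient a polynomial in u alone). Then R_1(u) = 1, R_2(u) = 1+u, R_3(u) = 2+4u+3u², and R_4(u) = 6+18u+25u²+15u³. -/
open MvPolynomial

/-- For the derivation D on ℚ[u,v,z] with D(u)=u²vz, D(v)=uv²z, D(z)=vz²,
D^{n-1}(vz) = vⁿzⁿ·R_n(u) for a polynomial R_n in u alone, and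
R₁(u)=1, R₂(u)=1+u, R₃(u)=2+4u+3u², R₄(u)=6+18u+25u²+15u³. -/
theorem ramanujan_Rn_small_values
    (D : Derivation ℚ (MvPolynomial (Fin 3) ℚ) (MvPolynomial (Fin 3) ℚ))
    (u v z : MvPolynomial (Fin 3) ℚ)
    (hu : u = X 0) (hv : v = X 1) (hz : z = X 2)
    (hDu : D u = u ^ 2 * v * z) (hDv : D v = u * v ^ 2 * z) (hDz : D z = v * z ^ 2) :
    (∀ n : ℕ, 1 ≤ n → ∃ R : Polynomial ℚ,
        (⇑D)^[n - 1] (v * z) = v ^ n * z ^ n * Polynomial.aeval u R) ∧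
    (⇑D)^[0] (v * z) = v * z ∧
    (⇑D)^[1] (v * z) = v ^ 2 * z ^ 2 * (1 + u) ∧
    (⇑D)^[2] (v * z) = v ^ 3 * z ^ 3 * (2 + 4 * u + 3 * u ^ 2) ∧
    (⇑D)^[3] (v * z) = v ^ 4 * z ^ 4 * (6 + 18 * u + 25 * u ^ 2 + 15 * u ^ 3) := by
  have key : ∀ (n : ℕ) (R : Polynomial ℚ),
      D (v ^ (n + 1) * z ^ (n + 1) * Polynomial.aeval u R) =
      v ^ (n + 2) * z ^ (n + 2) *
        Polynomial.aeval u (((n : Polynomial ℚ) + 1) * (1 + Polynomial.X) * R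
          + Polynomial.X ^ 2 * Polynomial.derivative R) := by
    intro n R
    rw [Derivation.leibniz, Derivation.leibniz, Derivation.leibniz_pow,
      Derivation.leibniz_pow, Derivation.map_aeval, hDu, hDv, hDz]
    simp only [smul_eq_mul, map_add, map_mul, map_pow, map_natCast, map_one,
      Polynomial.aeval_X, Nat.add_sub_cancel]
    push_cast
    ring
  have h1 : D (v * z) = v ^ 2 * z ^ 2 * (1 + u) := by
    rw [Derivation.leibniz, hDv, hDz]; simp only [smul_eq_mul]; ring
  have h2 : D (v ^ 2 * z ^ 2 * (1 + u)) =
      v ^ 3 * z ^ 3 * (2 + 4 * u + 3 * u ^ 2) := by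
    have := key 1 (1 + Polynomial.X)
    simp only [map_add, map_mul, map_one, map_pow, Polynomial.aeval_X,
      Polynomial.derivative_add, Polynomial.derivative_one, Polynomial.derivative_X,
      map_zero, zero_mul, zero_add, mul_zero, add_zero,
      Nat.cast_one, map_ofNat] at this
    rw [this]; ring
  have h3 : D (v ^ 3 * z ^ 3 * (2 + 4 * u + 3 * u ^ 2)) =
      v ^ 4 * z ^ 4 * (6 + 18 * u + 25 * u ^ 2 + 15 * u ^ 3) := by
    have := key 2 (2 + 4 * Polynomial.X + 3 * Polynomial.X ^ 2)
    simp only [map_add, map_mul, map_one, map_pow, Polynomial.aeval_X, map_ofNat,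
      Polynomial.derivative_add, Polynomial.derivative_one, Polynomial.derivative_X,
      Polynomial.derivative_ofNat, Polynomial.derivative_mul, Polynomial.derivative_X_pow,
      map_zero, zero_mul, zero_add, mul_zero, add_zero,
      Nat.cast_ofNat] at this
    rw [show v ^ 3 * z ^ 3 * (2 + 4 * u + 3 * u ^ 2)
        = v ^ (2 + 1) * z ^ (2 + 1) * (2 + 4 * u + 3 * u ^ 2) by ring, this]
    ring
  refine ⟨?_, rfl, by simpa using h1, ?_, ?_⟩
  · intro n hn
    induction n with
    | zero => omega
    | succ m ih =>
      rcases Nat.eq_or_lt_of_le hn with h | h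
      · exact ⟨1, by simp [← h]⟩
      · obtain ⟨R, hR⟩ := ih (by omega)
        obtain ⟨k, rfl⟩ : ∃ k, m = k + 1 := ⟨m - 1, by omega⟩
        refine ⟨((k : ℕ) + 1 : Polynomial ℚ) * (1 + Polynomial.X) * R
          + Polynomial.X ^ 2 * Polynomial.derivative R, ?_⟩
        simp only [Nat.add_sub_cancel] at hR ⊢
        rw [Function.iterate_succ_apply', hR, key k R]
  · rw [Function.iterate_succ_apply', Function.iterate_one, h1, h2]
  · rw [Function.iterate_succ_apply', Function.iterate_succ_apply',
      Function.iterate_one, h1, h2, h3]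
end

section
/- Let D be the derivation on ℚ[u,v,z] with D(u) = u²vz, D(v) = uv²z, D(z) = vz². Then for every n ≥ 1 there exists a polynomial p_n(u) in u alone such that D^{n-1}(z) = v^{n-1} z^n p_n(u). -/
open MvPolynomial

lemma deriv_aeval_poly (D : Derivation ℚ (MvPolynomial (Fin 3) ℚ) (MvPolynomial (Fin 3) ℚ))
    (a : MvPolynomial (Fin 3) ℚ) (p : Polynomial ℚ) :
    D (Polynomial.aeval a p) = Polynomial.aeval a (Polynomial.derivative p) * D a := by
  induction p using Polynomial.induction_on' with
  | add p q hp hq => simp [hp, hq, add_mul]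
  | monomial n c =>
    cases n with
    | zero => simp
    | succ m =>
      simp only [Polynomial.aeval_monomial, Polynomial.derivative_monomial]
      rw [Derivation.leibniz]
      simp [Derivation.leibniz_pow, Algebra.smul_def, mul_comm, mul_assoc, mul_left_comm]

/-- For the derivation D on ℚ[u,v,z] with D(u)=u²vz, D(v)=uv²z, D(z)=vz²,
for every n ≥ 1 there is a polynomial p_n in u alone with
D^{n-1}(z) = v^{n-1}·zⁿ·p_n(u). -/
theorem ramanujan_Tn_exists
    (D : Derivation ℚ (MvPolynomial (Fin 3) ℚ) (MvPolynomial (Fin 3) ℚ))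
    (u v z : MvPolynomial (Fin 3) ℚ)
    (hu : u = X 0) (hv : v = X 1) (hz : z = X 2)
    (hDu : D u = u ^ 2 * v * z) (hDv : D v = u * v ^ 2 * z) (hDz : D z = v * z ^ 2) :
    ∀ n : ℕ, 1 ≤ n → ∃ p : Polynomial ℚ,
      (⇑D)^[n - 1] z = v ^ (n - 1) * z ^ n * Polynomial.aeval u p := by
  have key : ∀ k : ℕ, ∃ p : Polynomial ℚ,
      (⇑D)^[k] z = v ^ k * z ^ (k + 1) * Polynomial.aeval u p := by
    intro k
    induction k with
    | zero => exact ⟨1, by simp⟩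
    | succ m ih =>
      obtain ⟨p, hp⟩ := ih
      refine ⟨(Polynomial.C (m : ℚ) * Polynomial.X + Polynomial.C ((m : ℚ) + 1)) * p
        + Polynomial.X ^ 2 * Polynomial.derivative p, ?_⟩
      rw [Function.iterate_succ_apply', hp]
      rw [Derivation.leibniz, Derivation.leibniz, Derivation.leibniz_pow,
        Derivation.leibniz_pow, deriv_aeval_poly, hDu, hDv, hDz]
      simp only [smul_eq_mul, map_add, map_mul, Polynomial.aeval_X, Polynomial.aeval_C,
        map_pow, map_natCast, map_one, nsmul_eq_mul, Nat.cast_add, Nat.cast_one]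
      push_cast
      cases m with
      | zero => push_cast; ring
      | succ j => push_cast [Nat.succ_sub_one]; ring
  intro n hn
  obtain ⟨p, hp⟩ := key (n - 1)
  refine ⟨p, ?_⟩
  rw [hp, Nat.sub_add_cancel hn]
end

section
/- Let D be the derivation on ℚ[u,v,z] with D(u) = u²vz, D(v) = uv²z, D(z) = vz². Then for every n ≥ 1 there exists a polynomial q_n(u) in u alone such that D^{n-1}(vz) = v^n z^n q_n(u), and moreover q_n(u) has nonnegative integer coefficients and degree at most n−1. -/
open MvPolynomial

/-- For the derivation D on ℚ[u,v,z] with D(u)=u²vz, D(v)=uv²z, D(z)=vz²,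
for every n ≥ 1 there is a polynomial q_n in u alone with nonnegative integer
coefficients and degree at most n−1 such that D^{n-1}(vz) = vⁿ·zⁿ·q_n(u). -/
theorem ramanujan_Rn_exists_nonneg_int_coeffs
    (D : Derivation ℚ (MvPolynomial (Fin 3) ℚ) (MvPolynomial (Fin 3) ℚ))
    (u v z : MvPolynomial (Fin 3) ℚ)
    (hu : u = X 0) (hv : v = X 1) (hz : z = X 2)
    (hDu : D u = u ^ 2 * v * z) (hDv : D v = u * v ^ 2 * z) (hDz : D z = v * z ^ 2) :
    ∀ n : ℕ, 1 ≤ n → ∃ q : Polynomial ℚ,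
      (⇑D)^[n - 1] (v * z) = v ^ n * z ^ n * Polynomial.aeval u q ∧
      (∀ i : ℕ, ∃ m : ℕ, q.coeff i = (m : ℚ)) ∧
      q.natDegree ≤ n - 1 := by
  intro n hn
  induction n, hn using Nat.le_induction with
  | base =>
    refine ⟨1, by simp, fun i => ?_, by simp⟩
    rcases i with _ | i
    · exact ⟨1, by simp⟩
    · exact ⟨0, by simp [Polynomial.coeff_one]⟩
  | succ n hn ih =>
    obtain ⟨q, hq, hc, hdeg⟩ := ih
    refine ⟨n • ((Polynomial.X + 1) * q) + Polynomial.X ^ 2 * Polynomial.derivative q,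
      ?_, ?_, ?_⟩
    · -- main equation
      obtain ⟨k, rfl⟩ : ∃ k, n = k + 1 := ⟨n - 1, (Nat.succ_pred_eq_of_pos hn).symm⟩
      have step : (⇑D)^[k + 1 + 1 - 1] (v * z) = D (v ^ (k + 1) * z ^ (k + 1) * Polynomial.aeval u q) := by
        simp only [Nat.add_sub_cancel] at hq ⊢
        rw [Function.iterate_succ_apply', hq]
      rw [step, Derivation.leibniz, Derivation.leibniz, Derivation.leibniz_pow,
        Derivation.leibniz_pow, Derivation.map_aeval, hDu, hDv, hDz]
      simp only [map_add, map_nsmul, map_mul, map_pow, Polynomial.aeval_X, map_one,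
        smul_eq_mul, nsmul_eq_mul, map_natCast, Nat.add_sub_cancel]
      push_cast
      ring
    · -- coefficients
      intro i
      rcases i with _ | _ | i
      · obtain ⟨a, ha⟩ := hc 0
        refine ⟨n * a, ?_⟩
        simp [Polynomial.coeff_smul, Polynomial.mul_coeff_zero, Polynomial.coeff_one,
          add_mul, ha, smul_eq_mul]
      · obtain ⟨a, ha⟩ := hc 0
        obtain ⟨b, hb⟩ := hc 1
        refine ⟨n * (a + b), ?_⟩
        simp [Polynomial.coeff_smul, add_mul, Polynomial.coeff_X_mul, ha, hb,
          smul_eq_mul, pow_two, mul_assoc]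
        push_cast; ring
      · obtain ⟨a, ha⟩ := hc (i + 1)
        obtain ⟨b, hb⟩ := hc (i + 2)
        refine ⟨n * (a + b) + (i + 1) * a, ?_⟩
        have h2 : (Polynomial.X ^ 2 * Polynomial.derivative q).coeff (i + 2)
            = (Polynomial.derivative q).coeff i := by
          simpa using Polynomial.coeff_X_pow_mul (Polynomial.derivative q) 2 i
        simp [Polynomial.coeff_smul, add_mul, Polynomial.coeff_X_mul, h2,
          Polynomial.coeff_derivative, ha, hb, smul_eq_mul]
        push_cast; ring
    · -- degree
      simp only [Nat.add_sub_cancel]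
      refine le_trans (Polynomial.natDegree_add_le _ _) (max_le ?_ ?_)
      · rw [← Nat.cast_smul_eq_nsmul ℚ]
        refine le_trans (Polynomial.natDegree_smul_le _ _)
          (le_trans Polynomial.natDegree_mul_le ?_)
        have h : (Polynomial.X + 1 : Polynomial ℚ).natDegree = 1 := by
          simpa using Polynomial.natDegree_X_add_C (1 : ℚ)
        omega
      · by_cases hq0 : q.natDegree = 0
        · simp [Polynomial.derivative_of_natDegree_zero hq0]
        · have hlt := Polynomial.natDegree_derivative_lt hq0
          refine le_trans Polynomial.natDegree_mul_le ?_
          have hX : (Polynomial.X ^ 2 : Polynomial ℚ).natDegree = 2 := by simp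
          omega
end

section
/- Setting u = 1 in the polynomial R_n defined by D^{n-1}(vz) = v^n z^n R_n(u) gives R_n(1) = n^{n-1} for all n ≥ 1. -/
open MvPolynomial

namespace RamanujanAux

/-- `U X c d` encodes `d! [τ^d] e^{Xτ}(1-τ)^{-c}`, defined by its recursion. -/
def U (X : ℚ) : ℕ → ℕ → ℚ
  | _, 0 => 1
  | c, d + 1 => X * U X c d + c * U X (c + 1) d

@[simp] lemma U_zero (X : ℚ) (c : ℕ) : U X c 0 = 1 := rfl

lemma U_succ (X : ℚ) (c d : ℕ) :
    U X c (d + 1) = X * U X c d + c * U X (c + 1) d := rfl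

lemma U_key (X : ℚ) : ∀ d : ℕ, (∀ c : ℕ,
      U X c (d + 1) = U X (c + 1) (d + 1) - ((d : ℚ) + 1) * U X (c + 1) d)
    ∧ (∀ c : ℕ,
      (c : ℚ) * U X (c + 1) (d + 1) + X * ((d : ℚ) + 1) * U X c d
        = ((c : ℚ) + (d : ℚ) + 1) * U X c (d + 1)) := by
  intro d
  induction d with
  | zero =>
      constructor
      · intro c
        simp [U_succ]; ring
      · intro c
        simp [U_succ]; ring
  | succ d ih =>
      obtain ⟨ihI, ihW⟩ := ih
      have hI : ∀ c : ℕ,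
          U X c (d + 2) = U X (c + 1) (d + 2) - ((d : ℚ) + 2) * U X (c + 1) (d + 1) := by
        intro c
        have h1 := ihI c
        have h2 := ihW (c + 1)
        have e1 : U X c (d + 2) = X * U X c (d + 1) + c * U X (c + 1) (d + 1) := rfl
        have e2 : U X (c + 1) (d + 2)
            = X * U X (c + 1) (d + 1) + ((c + 1 : ℕ) : ℚ) * U X (c + 2) (d + 1) := rfl
        rw [e1, e2]
        push_cast at h1 h2 ⊢
        linear_combination X * h1 - h2
      constructor
      · intro c
        have := hI c
        push_cast
        convert this using 3 <;> push_cast <;> ring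
      · intro c
        have h1 := hI c
        have e1 : U X c (d + 2) = X * U X c (d + 1) + c * U X (c + 1) (d + 1) := rfl
        have e2 : U X (c + 1) (d + 2)
            = X * U X (c + 1) (d + 1) + ((c + 1 : ℕ) : ℚ) * U X (c + 2) (d + 1) := rfl
        rw [e1, e2] at h1
        push_cast
        rw [e1, e2]
        push_cast at h1 ⊢
        linear_combination (-(c : ℚ)) * h1

lemma U_I (X : ℚ) (d c : ℕ) :
    U X c (d + 1) = U X (c + 1) (d + 1) - ((d : ℚ) + 1) * U X (c + 1) d :=
  (U_key X d).1 c

lemma U_W (X : ℚ) (d c : ℕ) :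
    (c : ℚ) * U X (c + 1) (d + 1) + X * ((d : ℚ) + 1) * U X c d
      = ((c : ℚ) + (d : ℚ) + 1) * U X c (d + 1) :=
  (U_key X d).2 c

lemma U_T (X : ℚ) : ∀ d : ℕ, U X 1 (d + 1) = X ^ (d + 1) + ((d : ℚ) + 1) * U X 1 d := by
  intro d
  induction d with
  | zero => simp [U_succ]
  | succ d ih =>
      have hW := U_W X d 1
      have e1 : U X 1 (d + 2) = X * U X 1 (d + 1) + ((1 : ℕ) : ℚ) * U X 2 (d + 1) := rfl
      rw [e1]
      push_cast at hW ⊢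
      linear_combination hW + X * ih

/-- `Psi a b j` is the evaluation at `(1,1,1)` of `D^j(u^{b-a}(vz)^a)`;
analytically `j! [s^j] e^{aT}/(1-T)^b` for the tree function `T`. -/
def Psi (a b j : ℕ) : ℚ :=
  match j with
  | 0 => 1
  | m + 1 => a * U ((a : ℚ) + m + 1) b m + b * U ((a : ℚ) + m + 1) (b + 1) m

@[simp] lemma Psi_zero (a b : ℕ) : Psi a b 0 = 1 := rfl

lemma Psi_succ (a b m : ℕ) :
    Psi a b (m + 1)
      = a * U ((a : ℚ) + m + 1) b m + b * U ((a : ℚ) + m + 1) (b + 1) m := rfl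

/-- The key dynamic-programming identity (★). -/
lemma Psi_star (j a b : ℕ) :
    Psi a b (j + 1) = b * Psi (a + 1) (b + 2) j + a * Psi (a + 1) (b + 1) j := by
  cases j with
  | zero => simp [Psi_succ]; ring
  | succ m =>
      set X : ℚ := (a : ℚ) + m + 2 with hX
      rw [Psi_succ a b (m + 1), Psi_succ (a + 1) (b + 2) m, Psi_succ (a + 1) (b + 1) m]
      push_cast
      rw [show ((a : ℚ) + (↑m + 1) + 1) = X by push_cast; ring]
      rw [show ((a : ℚ) + 1 + ↑m + 1) = X by push_cast; ring]
      have h1 := U_I X m b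
      have h2 : U X (b + 1) (m + 1) = X * U X (b + 1) m + ((b + 1 : ℕ) : ℚ) * U X (b + 2) m := rfl
      have h3 := U_I X m (b + 1)
      have h4 : U X (b + 2) (m + 1) = X * U X (b + 2) m + ((b + 2 : ℕ) : ℚ) * U X (b + 3) m := rfl
      push_cast at h1 h2 h3 h4
      simp only [show b + 1 + 1 = b + 2 from rfl, show b + 2 + 1 = b + 3 from rfl,
        show b + 1 + 1 + 1 = b + 3 from rfl] at h1 h2 h3 h4 ⊢
      linear_combination (a : ℚ) * h1 + (a : ℚ) * h2 + (b : ℚ) * h3 + (b : ℚ) * h4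

/-- Cayley's count: `Psi 1 1 j = (j+1)^j`. -/
lemma Psi_one_one (j : ℕ) : Psi 1 1 j = ((j : ℚ) + 1) ^ j := by
  cases j with
  | zero => simp
  | succ m =>
      rw [Psi_succ]
      rw [show ((1 : ℕ) : ℚ) + m + 1 = ((m : ℚ) + 2) by push_cast; ring]
      set X : ℚ := (m : ℚ) + 2 with hXdef
      have h2 : U X 1 (m + 1) = X * U X 1 m + ((1 : ℕ) : ℚ) * U X 2 m := rfl
      have hT := U_T X m
      push_cast at h2 hT ⊢
      linear_combination hT - h2

section Mv

variable (D : Derivation ℚ (MvPolynomial (Fin 3) ℚ) (MvPolynomial (Fin 3) ℚ))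
variable (u v z : MvPolynomial (Fin 3) ℚ)

lemma iter_smul (j : ℕ) (q : ℚ) (p : MvPolynomial (Fin 3) ℚ) :
    (⇑D)^[j] (q • p) = q • (⇑D)^[j] p := by
  induction j generalizing p with
  | zero => simp
  | succ j ih => simp [Function.iterate_succ_apply, D.map_smul, ih]

lemma iter_add (j : ℕ) (p q : MvPolynomial (Fin 3) ℚ) :
    (⇑D)^[j] (p + q) = (⇑D)^[j] p + (⇑D)^[j] q := by
  induction j generalizing p q with
  | zero => simp
  | succ j ih => simp [Function.iterate_succ_apply, map_add, ih]

lemma D_mon (hDu : D u = u ^ 2 * v * z) (hDv : D v = u * v ^ 2 * z) (hDz : D z = v * z ^ 2)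
    (c a : ℕ) :
    D (u ^ c * (v * z) ^ a)
      = ((a : ℚ) + c) • (u ^ (c + 1) * (v * z) ^ (a + 1))
        + (a : ℚ) • (u ^ c * (v * z) ^ (a + 1)) := by
  have hw : D (v * z) = (u + 1) * (v * z) ^ 2 := by
    rw [D.leibniz, hDv, hDz]; simp only [smul_eq_mul]; ring
  have hsm : ∀ (q : ℚ) (p : MvPolynomial (Fin 3) ℚ), q • p = C q * p := fun q p => by
    rw [Algebra.smul_def, algebraMap_eq]
  rw [D.leibniz, D.leibniz_pow, D.leibniz_pow, hw, hDu]
  simp only [smul_eq_mul, nsmul_eq_mul, hsm, map_add, map_natCast]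
  rcases c with _ | c <;> rcases a with _ | a <;>
    simp only [Nat.add_sub_cancel, Nat.zero_sub, pow_zero, Nat.cast_zero, zero_mul,
      mul_zero, one_mul, mul_one, zero_add, add_zero, map_zero, map_one, C_0] <;>
    push_cast <;> ring

/-- Main evaluation: `D^j(u^c (vz)^a)` at `(1,1,1)` equals `Psi a (a+c) j`. -/
lemma iter_eval (hu : u = X 0) (hv : v = X 1) (hz : z = X 2)
    (hDu : D u = u ^ 2 * v * z) (hDv : D v = u * v ^ 2 * z) (hDz : D z = v * z ^ 2) :
    ∀ j c a : ℕ,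
      aeval (fun _ : Fin 3 => (1 : ℚ)) ((⇑D)^[j] (u ^ c * (v * z) ^ a))
        = Psi a (a + c) j := by
  intro j
  induction j with
  | zero =>
      intro c a
      simp [hu, hv, hz]
  | succ j ih =>
      intro c a
      rw [Function.iterate_succ_apply, D_mon D u v z hDu hDv hDz c a,
        iter_add, iter_smul, iter_smul, map_add, map_smul, map_smul,
        ih (c + 1) (a + 1), ih c (a + 1), smul_eq_mul, smul_eq_mul]
      rw [show a + 1 + (c + 1) = (a + c) + 2 by omega, show a + 1 + c = (a + c) + 1 by omega]
      rw [Psi_star j a (a + c)]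
      push_cast
      ring

end Mv

end RamanujanAux

/-- Cayley's formula via the grammar: if D^{n-1}(vz) = vⁿzⁿ·R_n(u) then
R_n(1) = n^{n-1} for all n ≥ 1. -/
theorem ramanujan_Rn_at_one
    (D : Derivation ℚ (MvPolynomial (Fin 3) ℚ) (MvPolynomial (Fin 3) ℚ))
    (u v z : MvPolynomial (Fin 3) ℚ)
    (hu : u = X 0) (hv : v = X 1) (hz : z = X 2)
    (hDu : D u = u ^ 2 * v * z) (hDv : D v = u * v ^ 2 * z) (hDz : D z = v * z ^ 2) :
    ∀ n : ℕ, 1 ≤ n → ∀ R : Polynomial ℚ,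
      (⇑D)^[n - 1] (v * z) = v ^ n * z ^ n * Polynomial.aeval u R →
      R.eval 1 = (n : ℚ) ^ (n - 1) := by
  intro n hn R hR
  obtain ⟨m, rfl⟩ : ∃ m, n = m + 1 := ⟨n - 1, by omega⟩
  have hm : m + 1 - 1 = m := rfl
  have key := RamanujanAux.iter_eval D u v z hu hv hz hDu hDv hDz m 0 1
  rw [pow_zero, one_mul, pow_one] at key
  rw [hm] at hR ⊢
  rw [hR] at key
  rw [RamanujanAux.Psi_one_one] at key
  have hev : aeval (fun _ : Fin 3 => (1 : ℚ)) (v ^ (m + 1) * z ^ (m + 1) * Polynomial.aeval u R)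
      = R.eval 1 := by
    rw [map_mul, map_mul, map_pow, map_pow, hv, hz, aeval_X, aeval_X, hu,
      ← Polynomial.aeval_algHom_apply (aeval (fun _ : Fin 3 => (1 : ℚ))) (X 0) R,
      aeval_X, Polynomial.coe_aeval_eq_eval]
    simp
  rw [hev] at key
  rw [key]
  push_cast
  ring
end

section
/- Setting u = 0 in the polynomial R_n defined by D^{n-1}(vz) = v^n z^n R_n(u) gives R_n(0) = (n-1)! for all n ≥ 1. -/
open MvPolynomial

noncomputable def Tpoly : ℕ → Polynomial ℚ
  | 0 => 1
  | k+1 => ((k : ℚ)+1) • ((Polynomial.X + 1) * Tpoly k)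
      + Polynomial.X ^ 2 * (Tpoly k).derivative

lemma Tpoly_eval_zero (k : ℕ) : (Tpoly k).eval 0 = (k.factorial : ℚ) := by
  induction k with
  | zero => simp [Tpoly]
  | succ k ih => simp [Tpoly, Nat.factorial_succ, ih]

lemma D_aeval (D : Derivation ℚ (MvPolynomial (Fin 3) ℚ) (MvPolynomial (Fin 3) ℚ))
    (u : MvPolynomial (Fin 3) ℚ) (p : Polynomial ℚ) :
    D (Polynomial.aeval u p) = Polynomial.aeval u p.derivative * D u := by
  induction p using Polynomial.induction_on' with
  | add p q hp hq => simp [hp, hq]; ring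
  | monomial n a =>
    simp [Polynomial.aeval_monomial, Derivation.leibniz, Derivation.leibniz_pow,
      Polynomial.derivative_monomial, Algebra.smul_def, map_mul]
    ring

/-- Increasing trees via the grammar: if D^{n-1}(vz) = vⁿzⁿ·R_n(u) then
R_n(0) = (n-1)! for all n ≥ 1. -/
theorem ramanujan_Rn_at_zero
    (D : Derivation ℚ (MvPolynomial (Fin 3) ℚ) (MvPolynomial (Fin 3) ℚ))
    (u v z : MvPolynomial (Fin 3) ℚ)
    (hu : u = X 0) (hv : v = X 1) (hz : z = X 2)
    (hDu : D u = u ^ 2 * v * z) (hDv : D v = u * v ^ 2 * z) (hDz : D z = v * z ^ 2) :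
    ∀ n : ℕ, 1 ≤ n → ∀ R : Polynomial ℚ,
      (⇑D)^[n - 1] (v * z) = v ^ n * z ^ n * Polynomial.aeval u R →
      R.eval 0 = ((n - 1).factorial : ℚ) := by
  have key : ∀ k : ℕ, (⇑D)^[k] (v * z)
      = v ^ (k+1) * z ^ (k+1) * Polynomial.aeval u (Tpoly k) := by
    intro k
    induction k with
    | zero => simp [Tpoly]
    | succ k ih =>
      rw [Function.iterate_succ_apply', ih]
      rw [Derivation.leibniz, Derivation.leibniz, Derivation.leibniz_pow,
        Derivation.leibniz_pow, D_aeval D u, hDu, hDv, hDz]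
      show _ = v ^ (k+2) * z ^ (k+2) * Polynomial.aeval u (Tpoly (k+1))
      rw [show Tpoly (k+1) = ((k : ℚ)+1) • ((Polynomial.X + 1) * Tpoly k)
          + Polynomial.X ^ 2 * (Tpoly k).derivative from rfl]
      simp only [map_add, map_mul, map_smul, map_pow, Polynomial.aeval_X,
        Polynomial.aeval_one, smul_eq_mul, nsmul_eq_mul, Nat.cast_add, Nat.cast_one,
        Algebra.smul_def, algebraMap_eq, map_one, map_natCast, eq_natCast]
      push_cast
      ring
  intro n hn R hR
  obtain ⟨m, rfl⟩ : ∃ m, n = m + 1 := ⟨n - 1, (Nat.succ_pred_eq_of_pos hn).symm⟩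
  simp only [Nat.add_sub_cancel] at hR ⊢
  have h := (key m).symm.trans hR
  have h2 := congrArg (MvPolynomial.aeval (R := ℚ) (![0, 1, 1] : Fin 3 → ℚ)) h
  have hu0 : MvPolynomial.aeval (R := ℚ) (![0, 1, 1] : Fin 3 → ℚ) u = 0 := by simp [hu]
  have hv1 : MvPolynomial.aeval (R := ℚ) (![0, 1, 1] : Fin 3 → ℚ) v = 1 := by simp [hv]
  have hz1 : MvPolynomial.aeval (R := ℚ) (![0, 1, 1] : Fin 3 → ℚ) z = 1 := by simp [hz]
  simp only [map_mul, map_pow, hv1, hz1, one_pow, one_mul,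
    ← Polynomial.aeval_algHom_apply, hu0] at h2
  have e1 : ∀ p : Polynomial ℚ, Polynomial.aeval (0 : ℚ) p = p.eval 0 := by
    intro p; rw [Polynomial.aeval_def, Polynomial.eval, Polynomial.eval₂_eq_eval_map]
    simp [← Polynomial.coeff_zero_eq_eval_zero]
  rw [e1, e1] at h2
  rw [← h2, Tpoly_eval_zero]
end

section
/- For n ≥ 2 and k ≥ 0, the Ramanujan polynomials Q_{n,k}(x) satisfy the recurrence Q_{n,k}(x) = (x − k + 1)·Q_{n−1,k}(x+1) + (n + k − 2)·Q_{n−1,k−1}(x+1), where Q_{n,−1}(x) = 0. -/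
open Polynomial

/-- The Berndt–Evans–Wilson/Shor recurrence for the Ramanujan polynomials
Q_{n,k}(x) = ψ_{k+1}(n−1, x+n):
Q_{n,k}(x) = (x−k+1)·Q_{n−1,k}(x+1) + (n+k−2)·Q_{n−1,k−1}(x+1) for n ≥ 2, k ≥ 0,
with the convention Q_{n,−1} = 0. -/
theorem ramanujan_Q_recurrence
    (psi : ℕ → ℕ → Polynomial ℚ)
    (h_init : psi 0 1 = 1)
    (h_zero : ∀ r, psi r 0 = 0)
    (h_big : ∀ r k, k > r + 1 → psi r k = 0)
    (h_rec : ∀ r k, 1 ≤ k →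
      psi (r + 1) k = (X - 1) * (psi r k).comp (X - 1)
        + psi (r + 1) (k - 1) - (psi (r + 1) (k - 1)).comp (X - 1))
    (Q : ℕ → ℕ → Polynomial ℚ)
    (hQ : ∀ n k, 1 ≤ n → Q n k = (psi (n - 1) (k + 1)).comp (X + C (n : ℚ))) :
    ∀ n k : ℕ, 2 ≤ n →
      Q n k = (X - C (k : ℚ) + 1) * (Q (n - 1) k).comp (X + 1)
        + C ((n : ℚ) + (k : ℚ) - 2) *
            (if k = 0 then 0 else (Q (n - 1) (k - 1)).comp (X + 1)) := by
  have key : ∀ k r : ℕ, psi (r+1) (k+1)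
      = (X - (C (r:ℚ) + C (k:ℚ) + 1)) * psi r (k+1) + (C (r:ℚ) + C (k:ℚ)) * psi r k := by
    intro k
    induction k with
    | zero =>
      intro r
      induction r with
      | zero =>
        have h := h_rec 0 1 le_rfl
        rw [h_init, h_zero, one_comp, zero_comp] at h
        rw [h, h_init, h_zero]
        push_cast
        simp only [map_zero]
        ring
      | succ r ih =>
        have h1 := h_rec (r+1) 1 le_rfl
        rw [h_zero, zero_comp] at h1
        have h2 := h_rec r 1 le_rfl
        rw [h_zero, zero_comp] at h2
        have ihc := congrArg (fun p => p.comp (X - 1)) ih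
        simp only [add_comp, sub_comp, mul_comp, X_comp, C_comp, one_comp] at ihc
        simp only [h_zero, zero_comp, mul_zero, add_zero] at ih ihc
        rw [h1, ihc, h2, h_zero]
        push_cast
        simp only [map_add, map_one, map_zero]
        ring
    | succ k ihk =>
      intro r
      induction r with
      | zero =>
        rcases Nat.eq_zero_or_pos k with hk | hk
        · subst hk
          have h11 : psi 1 1 = X - 1 := by
            have h := h_rec 0 1 le_rfl
            rw [h_init, h_zero, one_comp, zero_comp] at h
            rw [h]; ring
          have h := h_rec 0 2 (by norm_num)
          have hb : psi 0 2 = 0 := h_big 0 2 (by norm_num)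
          rw [hb, zero_comp] at h
          rw [show (2:ℕ) - 1 = 1 from rfl, h11] at h
          simp only [sub_comp, X_comp, one_comp] at h
          rw [h, hb, h_init]
          push_cast
          simp only [map_add, map_one, map_zero]
          ring
        · have hb1 : psi 1 (k+2) = 0 := h_big 1 (k+2) (by omega)
          have hb2 : psi 0 (k+2) = 0 := h_big 0 (k+2) (by omega)
          have hb3 : psi 0 (k+1) = 0 := h_big 0 (k+1) (by omega)
          rw [hb1, hb2, hb3]
          ring
      | succ r ihr =>
        -- abbreviations
        have h1 := h_rec (r+1) (k+2) (by omega)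
        have h4 := h_rec r (k+2) (by omega)
        have h5 := h_rec r (k+1) (by omega)
        rw [show (k+2) - 1 = k+1 from rfl] at h1 h4
        rw [show (k+1) - 1 = k from rfl] at h5
        have h2 := ihr
        have h2c := congrArg (fun p => p.comp (X - 1)) ihr
        have h3 := ihk (r+1)
        have h3c := congrArg (fun p => p.comp (X - 1)) (ihk (r+1))
        simp only [add_comp, sub_comp, mul_comp, X_comp, C_comp, one_comp] at h2c h3c
        push_cast at h1 h2 h2c h3 h3c h4 h5 ⊢
        simp only [map_add, map_one] at h1 h2 h2c h3 h3c h4 h5 ⊢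
        linear_combination h1 + (X - 1) * h2c + h3 - h3c
          - (X - (C (r:ℚ) + C (k:ℚ) + 3)) * h4
          - (C (r:ℚ) + C (k:ℚ) + 1) * h5
  intro n k hn
  obtain ⟨m, rfl⟩ : ∃ m, n = m + 2 := ⟨n - 2, by omega⟩
  have hQ1 := hQ (m+2) k (by omega)
  rw [show (m+2) - 1 = m + 1 from rfl] at hQ1
  have hQ2 := hQ (m+1) k (by omega)
  rw [show (m+1) - 1 = m from rfl] at hQ2
  rw [show m+2-1 = m+1 from rfl]
  rw [hQ1, key k m, hQ2]
  rcases Nat.eq_zero_or_pos k with hk | hk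
  · subst hk
    simp only [if_pos rfl, mul_zero, add_zero, h_zero, mul_zero]
    rw [comp_assoc]
    simp only [add_comp, mul_comp, sub_comp, X_comp, C_comp, one_comp, zero_comp,
      mul_zero, add_zero, map_zero]
    push_cast
    simp only [map_add, map_sub, map_one, map_ofNat]
    ring_nf
  · obtain ⟨j, rfl⟩ : ∃ j, k = j + 1 := ⟨k - 1, by omega⟩
    rw [if_neg (by omega)]
    have hQ3 := hQ (m+1) j (by omega)
    rw [show (m+1) - 1 = m from rfl] at hQ3
    rw [show (j+1) - 1 = j from rfl, hQ3]
    rw [comp_assoc, comp_assoc]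
    simp only [add_comp, mul_comp, sub_comp, X_comp, C_comp, one_comp, zero_comp]
    push_cast
    simp only [map_add, map_sub, map_one, map_ofNat]
    ring_nf
end

section
/- For every n ≥ 1, ∑_{k=0}^{n−1} Q_{n,k}(x) = (x+n)^{n−1}. -/
/-!
Write `S r = ∑ₖ ψₖ(r, x)`. Summing the recurrence over `k`, the terms
`ψₖ₋₁(r+1, x) − ψₖ₋₁(r+1, x−1)` add up to `S (r+1) (x) − S (r+1) (x−1)`, so that
`S (r+1) (x−1) = (x−1) S r (x−1)`; substituting `x + 1` for `x` gives `S (r+1) = x · S r`, hence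
Ramanujan's identity `S r = x ^ r`, and Shor's identity is its translate by `n`.
-/

open Polynomial Finset

namespace Ramanujan

variable {R : Type*} [CommRing R] (psi : ℕ → ℕ → R[X])

theorem comp_X_sub_one_injective : Function.Injective fun p : R[X] ↦ p.comp (X - 1) := fun p q h ↦
  taylor_injective (-1 : R) (by simpa [taylor_apply, sub_eq_add_neg] using h)

theorem sum_range_eq_of_le (h_big : ∀ r k, k > r + 1 → psi r k = 0) {r M : ℕ} (hM : r + 2 ≤ M) :
    ∑ k ∈ range M, psi r k = ∑ k ∈ range (r + 2), psi r k :=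
  (sum_subset (range_subset_range.mpr hM) fun k _ hk ↦ h_big r k (by simp at hk; omega)).symm

theorem sum_range_succ_eq_of_le (h_zero : ∀ r, psi r 0 = 0)
    (h_big : ∀ r k, k > r + 1 → psi r k = 0) {r M : ℕ} (hM : r + 1 ≤ M) :
    ∑ k ∈ range M, psi r (k + 1) = ∑ k ∈ range (r + 2), psi r k := by
  rw [← sum_range_eq_of_le psi h_big (M := M + 1) (by omega), sum_range_succ', h_zero, add_zero]

theorem sum_range_succ_comp_X_sub_one (h_zero : ∀ r, psi r 0 = 0)
    (h_big : ∀ r k, k > r + 1 → psi r k = 0)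
    (h_rec : ∀ r k, 1 ≤ k →
      psi (r + 1) k = (X - 1) * (psi r k).comp (X - 1)
        + psi (r + 1) (k - 1) - (psi (r + 1) (k - 1)).comp (X - 1)) (r : ℕ) :
    (∑ k ∈ range (r + 3), psi (r + 1) k).comp (X - 1)
      = (X * ∑ k ∈ range (r + 2), psi r k).comp (X - 1) := by
  have h_summed := sum_congr (rfl : range (r + 3) = _) fun k _ ↦ h_rec r (k + 1) (by omega)
  simp only [add_tsub_cancel_right, sum_add_distrib, sum_sub_distrib, ← mul_sum,
    ← Polynomial.sum_comp,
    sum_range_succ_eq_of_le psi h_zero h_big (show r + 1 + 1 ≤ r + 3 by omega),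
    sum_range_succ_eq_of_le psi h_zero h_big (show r + 1 ≤ r + 3 by omega)] at h_summed
  rw [mul_comp, X_comp]
  linear_combination h_summed

theorem sum_range_eq_X_pow (h_init : psi 0 1 = 1) (h_zero : ∀ r, psi r 0 = 0)
    (h_big : ∀ r k, k > r + 1 → psi r k = 0)
    (h_rec : ∀ r k, 1 ≤ k →
      psi (r + 1) k = (X - 1) * (psi r k).comp (X - 1)
        + psi (r + 1) (k - 1) - (psi (r + 1) (k - 1)).comp (X - 1)) (r : ℕ) :
    ∑ k ∈ range (r + 2), psi r k = X ^ r := by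
  induction r with
  | zero => simp [sum_range_succ, h_zero, h_init]
  | succ r ih =>
    rw [comp_X_sub_one_injective (sum_range_succ_comp_X_sub_one psi h_zero h_big h_rec r), ih,
      pow_succ']

end Ramanujan

open Ramanujan in
/-- Shor's identity: ∑_{k=0}^{n−1} Q_{n,k}(x) = (x+n)^{n−1} for all n ≥ 1,
where Q_{n,k}(x) = ψ_{k+1}(n−1, x+n). -/
theorem shor_Q_sum
    (psi : ℕ → ℕ → Polynomial ℚ)
    (h_init : psi 0 1 = 1)
    (h_zero : ∀ r, psi r 0 = 0)
    (h_big : ∀ r k, k > r + 1 → psi r k = 0)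
    (h_rec : ∀ r k, 1 ≤ k →
      psi (r + 1) k = (X - 1) * (psi r k).comp (X - 1)
        + psi (r + 1) (k - 1) - (psi (r + 1) (k - 1)).comp (X - 1))
    (Q : ℕ → ℕ → Polynomial ℚ)
    (hQ : ∀ n k, 1 ≤ n → Q n k = (psi (n - 1) (k + 1)).comp (X + C (n : ℚ))) :
    ∀ n : ℕ, 1 ≤ n →
      ∑ k ∈ Finset.range n, Q n k = (X + C (n : ℚ)) ^ (n - 1) := by
  intro n hn
  rw [sum_congr rfl fun k _ ↦ hQ n k hn, ← Polynomial.sum_comp,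
    sum_range_succ_eq_of_le psi h_zero h_big (by omega : n - 1 + 1 ≤ n),
    sum_range_eq_X_pow psi h_init h_zero h_big h_rec, X_pow_comp]
end
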